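/- In the monoid M = Mon⟨a,b | ab=ba, aa=bb⟩, every element can be written uniquely in the form a^n or a^n·b for some n ≥ 0. -/

import Mathlib

/-- The relations of the monoid `Mon⟨a,b | ab = ba, aa = bb⟩` on the free monoid
over two generators `a = 0`, `b = 1`. -/
def abRels : FreeMonoid (Fin 2) → FreeMonoid (Fin 2) → Prop := fun x y =>
  (x = FreeMonoid.of 0 * FreeMonoid.of 1 ∧ y = FreeMonoid.of 1 * FreeMonoid.of 0) ∨
  (x = FreeMonoid.of 0 * FreeMonoid.of 0 ∧ y = FreeMonoid.of 1 * FreeMonoid.of 1)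

/-!
Left multiplication by `a` or `b` maps the words `a ^ n` and `a ^ n * b` to words of the same
shape (using `b * a ^ n * b = a ^ n * b * b = a ^ (n + 2)`), so these words exhaust the monoid.
They are pairwise distinct because the homomorphism `a ↦ (1, 0)`, `b ↦ (1, 1)` to
`ℕ × ZMod 2` (length and parity of the number of `b`s) separates them.
-/

namespace AbMonoid

local notation "M" => PresentedMonoid abRels

noncomputable def normalForm (p : ℕ × Bool) : M :=
  PresentedMonoid.of abRels 0 ^ p.1 * if p.2 then PresentedMonoid.of abRels 1 else 1

theorem of_zero_mul_of_one :
    PresentedMonoid.of abRels 0 * PresentedMonoid.of abRels 1 =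
      PresentedMonoid.of abRels 1 * PresentedMonoid.of abRels 0 :=
  PresentedMonoid.mk_eq_mk_of_rel (Or.inl ⟨rfl, rfl⟩)

theorem of_zero_mul_of_zero :
    PresentedMonoid.of abRels 0 * PresentedMonoid.of abRels 0 =
      PresentedMonoid.of abRels 1 * PresentedMonoid.of abRels 1 :=
  PresentedMonoid.mk_eq_mk_of_rel (Or.inr ⟨rfl, rfl⟩)

theorem of_zero_mul_normalForm (p : ℕ × Bool) :
    PresentedMonoid.of abRels 0 * normalForm p = normalForm (p.1 + 1, p.2) := by
  rw [normalForm, normalForm, ← mul_assoc, ← pow_succ']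

theorem commute_of_one_of_zero_pow (n : ℕ) :
    Commute (PresentedMonoid.of abRels 1) (PresentedMonoid.of abRels 0 ^ n) :=
  Commute.pow_right of_zero_mul_of_one.symm n

theorem of_one_mul_normalForm_false (n : ℕ) :
    PresentedMonoid.of abRels 1 * normalForm (n, false) = normalForm (n, true) := by
  simp [normalForm, (commute_of_one_of_zero_pow n).eq]

theorem of_one_mul_normalForm_true (n : ℕ) :
    PresentedMonoid.of abRels 1 * normalForm (n, true) = normalForm (n + 2, false) := by
  simp only [normalForm, if_true, Bool.false_eq_true, if_false, mul_one]
  rw [← mul_assoc, (commute_of_one_of_zero_pow n).eq, mul_assoc, ← of_zero_mul_of_zero,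
    ← pow_two, ← pow_add]

theorem normalForm_surjective : Function.Surjective normalForm := by
  intro x
  have hx : x ∈ Submonoid.closure (Set.range (PresentedMonoid.of abRels)) := by simp
  induction hx using Submonoid.closure_induction_left with
  | one => exact ⟨(0, false), by simp [normalForm]⟩
  | mul_left g hg y _ ih =>
    obtain ⟨i, rfl⟩ := hg
    obtain ⟨⟨n, e⟩, rfl⟩ := ih
    obtain rfl | rfl : i = 0 ∨ i = 1 := by omega
    · exact ⟨(n + 1, e), (of_zero_mul_normalForm (n, e)).symm⟩
    · cases e
      · exact ⟨(n, true), (of_one_mul_normalForm_false n).symm⟩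
      · exact ⟨(n + 2, false), (of_one_mul_normalForm_true n).symm⟩

noncomputable def lengthParity : M →* Multiplicative (ℕ × ZMod 2) :=
  PresentedMonoid.lift (fun i => Multiplicative.ofAdd (1, if i = 0 then 0 else 1)) (by
    rintro x y (⟨rfl, rfl⟩ | ⟨rfl, rfl⟩) <;> simp <;> decide)

theorem lengthParity_normalForm (p : ℕ × Bool) :
    (lengthParity (normalForm p)).toAdd = (p.1 + p.2.toNat, (p.2.toNat : ZMod 2)) := by
  rcases p with ⟨n, _ | _⟩ <;> simp [normalForm, lengthParity, PresentedMonoid.lift_of]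

theorem normalForm_injective : Function.Injective normalForm := by
  rintro ⟨m, e⟩ ⟨n, f⟩ h
  obtain ⟨hlength, hparity⟩ : m + e.toNat = n + f.toNat ∧ (e.toNat : ZMod 2) = f.toNat := by
    simpa only [lengthParity_normalForm, Prod.mk.injEq] using
      congrArg (fun x => (lengthParity x).toAdd) h
  obtain rfl : e = f := by cases e <;> cases f <;> simp_all
  obtain rfl : m = n := by omega
  rfl

end AbMonoid

/-- In `M = Mon⟨a,b | ab = ba, aa = bb⟩`, every element can be written uniquely
as `a ^ n` or `a ^ n * b` for some `n ≥ 0` (encoded by a pair `(n, flag)` where the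
flag records the presence of the trailing `b`). -/
theorem abMonoid_normal_form (x : PresentedMonoid abRels) :
    ∃! p : ℕ × Bool,
      x = (PresentedMonoid.of abRels 0) ^ p.1 *
        (if p.2 then PresentedMonoid.of abRels 1 else 1) := by
  obtain ⟨p, rfl⟩ := AbMonoid.normalForm_surjective x
  exact ⟨p, rfl, fun q hq => AbMonoid.normalForm_injective hq.symm⟩
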